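/- arXiv:1404.2670 — 4 statements merged into one kernel-verified Lean document; each statement's English description precedes it below -/
import Mathlib

section
/- Let λ > 0, 0 < κ ≤ 1, and for t ≥ 0 define F(t) = 1 - e^{-(t/λ)^κ} (the Weibull CDF) and G(t) = (1/(λ Γ(1 + 1/κ))) ∫_0^t e^{-(x/λ)^κ} dx (the residual lifetime CDF of the corresponding renewal process). Then G(t) ≤ F(t) for all t ≥ 0. -/
open Real MeasureTheory Set

lemma real_rpow_add_le {p a b : ℝ} (ha : 0 ≤ a) (hb : 0 ≤ b) (hp : 0 ≤ p) (hp1 : p ≤ 1) :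
    (a + b) ^ p ≤ a ^ p + b ^ p := by
  have := NNReal.rpow_add_le_add_rpow (a.toNNReal) (b.toNNReal) hp hp1
  calc (a + b) ^ p = ((a.toNNReal + b.toNNReal : NNReal) : ℝ) ^ p := by
        rw [NNReal.coe_add, Real.coe_toNNReal _ ha, Real.coe_toNNReal _ hb]
    _ = (((a.toNNReal + b.toNNReal) ^ p : NNReal) : ℝ) := by
        rw [← NNReal.coe_rpow]
    _ ≤ ((a.toNNReal ^ p + b.toNNReal ^ p : NNReal) : ℝ) := by exact_mod_cast this
    _ = a ^ p + b ^ p := by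
        push_cast
        rw [Real.coe_toNNReal _ ha, Real.coe_toNNReal _ hb]

theorem residual_lifetime_cdf_le_weibull_cdf (lam κ : ℝ) (hlam : 0 < lam)
    (hκ0 : 0 < κ) (hκ1 : κ ≤ 1) (t : ℝ) (ht : 0 ≤ t) :
    (1 / (lam * Real.Gamma (1 + 1 / κ))) * ∫ x in (0:ℝ)..t, Real.exp (-((x / lam) ^ κ))
      ≤ 1 - Real.exp (-((t / lam) ^ κ)) := by
  set f : ℝ → ℝ := fun x => Real.exp (-((x / lam) ^ κ)) with hf
  set g : ℝ → ℝ := fun y => Real.exp (-(y ^ κ)) with hg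
  have hκne : κ ≠ 0 := hκ0.ne'
  have hfg : ∀ x, f x = g (lam⁻¹ * x) := by
    intro x; simp [hf, hg, div_eq_inv_mul]
  -- integrability of g on Ioi 0
  have hgint : IntegrableOn g (Ioi 0) := by
    rw [← integrableOn_Ioi_comp_rpow_iff' g (one_div_ne_zero hκne)]
    refine ((Real.GammaIntegral_convergent (by positivity : (0:ℝ) < 1/κ)).congr_fun
      (fun x hx => ?_) measurableSet_Ioi)
    have hx0 : (0:ℝ) < x := hx
    simp only [smul_eq_mul, hg]
    rw [← Real.rpow_mul hx0.le, one_div_mul_cancel hκne, Real.rpow_one, mul_comm]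
  -- integrability of f on Ioi 0
  have hfint : IntegrableOn f (Ioi 0) := by
    have := (integrableOn_Ioi_comp_mul_left_iff g 0 (inv_pos.2 hlam)).2
      (by simpa using hgint)
    refine this.congr_fun (fun x _ => (hfg x).symm ▸ rfl) measurableSet_Ioi
  -- mean value
  have hμ : ∫ x in Ioi (0:ℝ), f x = lam * Real.Gamma (1 + 1 / κ) := by
    have h1 : ∫ x in Ioi (0:ℝ), f x = ∫ x in Ioi (0:ℝ), g (lam⁻¹ * x) := by
      exact setIntegral_congr_fun measurableSet_Ioi fun x _ => hfg x
    rw [h1, integral_comp_mul_left_Ioi g 0 (inv_pos.2 hlam), mul_zero]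
    rw [show (∫ x in Ioi (0:ℝ), g x) = Real.Gamma (1/κ + 1) from integral_exp_neg_rpow hκ0]
    rw [smul_eq_mul, inv_inv, add_comm (1/κ) 1]
  have hΓpos : 0 < Real.Gamma (1 + 1 / κ) := Real.Gamma_pos_of_pos (by positivity)
  have hμpos : 0 < lam * Real.Gamma (1 + 1 / κ) := by positivity
  -- translation: ∫ x in Ioi t, f x = ∫ x in Ioi 0, f (x + t)
  have hshift : ∫ x in Ioi t, f x = ∫ x in Ioi (0:ℝ), f (x + t) := by
    have := (measurePreserving_add_right (volume : Measure ℝ) t).setIntegral_preimage_emb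
      (measurableEmbedding_addRight t) f (Ioi t)
    rw [← this]
    congr 1
    ext x
    simp [lt_add_iff_pos_left]
  have hshift_int : IntegrableOn (fun x => f (x + t)) (Ioi (0:ℝ)) := by
    have h1 : IntegrableOn f (Ioi t) := hfint.mono_set (Ioi_subset_Ioi ht)
    have := ((measurePreserving_add_right (volume : Measure ℝ) t).integrableOn_comp_preimage
      (measurableEmbedding_addRight t)).2 h1
    have hpre : (fun x => x + t) ⁻¹' Ioi t = Ioi (0:ℝ) := by
      ext x; simp [lt_add_iff_pos_left]
    rwa [hpre] at this
  -- pointwise bound: f t * f x ≤ f (x + t) for x ≥ 0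
  have hpt : ∀ x ∈ Ioi (0:ℝ), f t * f x ≤ f (x + t) := by
    intro x hx
    have hx0 : (0:ℝ) ≤ x := (le_of_lt hx)
    have hsub : ((x + t) / lam) ^ κ ≤ (x / lam) ^ κ + (t / lam) ^ κ := by
      have : (x + t) / lam = x / lam + t / lam := add_div x t lam
      rw [this]
      exact real_rpow_add_le (by positivity) (by positivity) hκ0.le hκ1
    calc f t * f x = Real.exp (-((x / lam) ^ κ + (t / lam) ^ κ)) := by
          rw [hf]; rw [← Real.exp_add]; ring_nf
      _ ≤ f (x + t) := Real.exp_le_exp.2 (by linarith)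
  -- tail bound
  have htail : f t * (lam * Real.Gamma (1 + 1 / κ)) ≤ ∫ x in Ioi t, f x := by
    rw [hshift, ← hμ, ← integral_const_mul]
    exact setIntegral_mono_on (hfint.const_mul _) hshift_int measurableSet_Ioi hpt
  -- split the integral
  have hIoc : IntegrableOn f (Ioc 0 t) := hfint.mono_set Ioc_subset_Ioi_self
  have hIoiT : IntegrableOn f (Ioi t) := hfint.mono_set (Ioi_subset_Ioi ht)
  have hsplit : (∫ x in (0:ℝ)..t, f x) + ∫ x in Ioi t, f x = lam * Real.Gamma (1 + 1 / κ) := by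
    rw [intervalIntegral.integral_of_le ht, ← hμ]
    rw [← setIntegral_union (Ioc_disjoint_Ioi le_rfl) measurableSet_Ioi hIoc hIoiT,
      Ioc_union_Ioi_eq_Ioi ht]
  -- conclude
  rw [div_mul_eq_mul_div, one_mul, div_le_iff₀ hμpos]
  have : (∫ x in (0:ℝ)..t, f x) ≤ lam * Real.Gamma (1 + 1 / κ) - f t * (lam * Real.Gamma (1 + 1 / κ)) := by
    linarith
  calc (∫ x in (0:ℝ)..t, f x) ≤ lam * Real.Gamma (1 + 1 / κ) - f t * (lam * Real.Gamma (1 + 1 / κ)) := this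
    _ = (1 - Real.exp (-((t / lam) ^ κ))) * (lam * Real.Gamma (1 + 1 / κ)) := by rw [hf]; ring
end

section
/- Let λ > 0, κ ≥ 1, and define F(t) = 1 - e^{-(t/λ)^κ} and G(t) = (1/(λ Γ(1 + 1/κ))) ∫_0^t e^{-(x/λ)^κ} dx for t ≥ 0. Then G(t) ≥ F(t) for all t ≥ 0. -/
/-! For `κ ≥ 1` the Weibull survival function `S x = exp (-(x / λ) ^ κ)` is submultiplicative,
`S (x + t) ≤ S x * S t`, by superadditivity of `x ↦ x ^ κ` on `[0, ∞)`. Integrating over `x > 0`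
bounds the tail `∫_t^∞ S` by `S t * ∫_0^∞ S = S t * λ Γ(1 + 1/κ)`; subtracting it from the total
mass `λ Γ(1 + 1/κ)` gives the claim. -/

open Real MeasureTheory Set

theorem integral_Ioi_comp_add_right {E : Type*} [NormedAddCommGroup E] [NormedSpace ℝ E]
    (f : ℝ → E) (a t : ℝ) :
    ∫ x in Ioi a, f (x + t) = ∫ x in Ioi (a + t), f x := by
  have := (measurePreserving_add_right volume t).setIntegral_preimage_emb
    (MeasurableEquiv.addRight t).measurableEmbedding f (Ioi (a + t))
  simpa [Function.comp_def] using this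

theorem integrableOn_Ioi_comp_add_right_iff {E : Type*} [NormedAddCommGroup E]
    (f : ℝ → E) (a t : ℝ) :
    IntegrableOn (fun x => f (x + t)) (Ioi a) ↔ IntegrableOn f (Ioi (a + t)) := by
  have := (measurePreserving_add_right volume t).integrableOn_comp_preimage
    (MeasurableEquiv.addRight t).measurableEmbedding (f := f) (s := Ioi (a + t))
  simpa [Function.comp_def] using this

theorem one_sub_mul_integral_Ioi_le_intervalIntegral {f : ℝ → ℝ} {t : ℝ} (ht : 0 ≤ t)
    (hf : IntegrableOn f (Ioi 0)) (hmul : ∀ x, 0 < x → f (x + t) ≤ f x * f t) :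
    (1 - f t) * ∫ x in Ioi 0, f x ≤ ∫ x in 0..t, f x := by
  have htail_int : IntegrableOn f (Ioi t) := hf.mono_set (Ioi_subset_Ioi ht)
  have hshift_int : IntegrableOn (fun x => f (x + t)) (Ioi 0) := by
    rwa [integrableOn_Ioi_comp_add_right_iff, zero_add]
  have hsplit := intervalIntegral.integral_interval_add_Ioi hf htail_int
  have htail : ∫ x in Ioi t, f x ≤ (∫ x in Ioi 0, f x) * f t :=
    calc ∫ x in Ioi t, f x = ∫ x in Ioi 0, f (x + t) := by
          rw [integral_Ioi_comp_add_right, zero_add]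
      _ ≤ ∫ x in Ioi 0, f x * f t :=
          setIntegral_mono_on hshift_int (hf.mul_const _) measurableSet_Ioi hmul
      _ = (∫ x in Ioi 0, f x) * f t := integral_mul_const _ _
  linarith

theorem exp_neg_rpow_add_le {κ a b : ℝ} (hκ : 1 ≤ κ) (ha : 0 ≤ a) (hb : 0 ≤ b) :
    exp (-(a + b) ^ κ) ≤ exp (-a ^ κ) * exp (-b ^ κ) := by
  rw [← exp_add, exp_le_exp]
  linarith [add_rpow_le_rpow_add ha hb hκ]

section Weibull

variable {lam κ : ℝ}

theorem integrableOn_exp_neg_div_rpow (hlam : 0 < lam) (hκ : 0 < κ) :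
    IntegrableOn (fun x => exp (-(x / lam) ^ κ)) (Ioi 0) := by
  simp_rw [div_eq_mul_inv]
  rw [integrableOn_Ioi_comp_mul_right_iff (fun y => exp (-y ^ κ)) 0 (inv_pos.2 hlam), zero_mul]
  simpa using integrableOn_rpow_mul_exp_neg_rpow neg_one_lt_zero hκ

theorem integral_exp_neg_div_rpow (hlam : 0 < lam) (hκ : 0 < κ) :
    ∫ x in Ioi 0, exp (-(x / lam) ^ κ) = lam * Gamma (1 + 1 / κ) := by
  simp_rw [div_eq_mul_inv]
  rw [integral_comp_mul_right_Ioi (fun y => exp (-y ^ κ)) 0 (inv_pos.2 hlam), zero_mul,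
    integral_exp_neg_rpow hκ, inv_inv, smul_eq_mul, one_mul, one_div, add_comm]

end Weibull

theorem weibull_cdf_le_residual_lifetime_cdf (lam κ : ℝ) (hlam : 0 < lam)
    (hκ : 1 ≤ κ) (t : ℝ) (ht : 0 ≤ t) :
    1 - Real.exp (-((t / lam) ^ κ))
      ≤ (1 / (lam * Real.Gamma (1 + 1 / κ))) * ∫ x in (0:ℝ)..t, Real.exp (-((x / lam) ^ κ)) := by
  have hκ0 : 0 < κ := by linarith
  have key := one_sub_mul_integral_Ioi_le_intervalIntegral ht
    (integrableOn_exp_neg_div_rpow hlam hκ0) fun x hx => by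
      rw [add_div]
      exact exp_neg_rpow_add_le hκ (div_nonneg hx.le hlam.le) (div_nonneg ht hlam.le)
  rw [integral_exp_neg_div_rpow hlam hκ0] at key
  have hmean : 0 < lam * Gamma (1 + 1 / κ) := mul_pos hlam (Gamma_pos_of_pos (by positivity))
  rw [one_div_mul_eq_div, le_div_iff₀ hmean]
  exact key
end

section
/- For all integers n ≥ 0 and d ≥ 1, ∑_{k=n+1}^∞ 2^{-2k} · C(k+d-1, d-1) = (1/3) · 2^{-2n} · ∑_{k=0}^{d-1} C(n+d, k) · (1/3)^{d-1-k}, where C denotes the binomial coefficient. -/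
open Finset

lemma choose_le_two_pow' (N r : ℕ) : (Nat.choose N r : ℝ) ≤ 2 ^ N := by
  have h : Nat.choose N r ≤ 2 ^ N := by
    rcases le_or_gt r N with h | h
    · calc Nat.choose N r ≤ ∑ i ∈ range (N + 1), Nat.choose N i :=
            Finset.single_le_sum (f := fun i => Nat.choose N i)
              (fun i _ => Nat.zero_le _) (mem_range.2 (Nat.lt_succ_of_le h))
        _ = 2 ^ N := Nat.sum_range_choose N
    · simp [Nat.choose_eq_zero_of_lt h]
  exact_mod_cast h

lemma summable_aux (m a b : ℕ) :
    Summable (fun k : ℕ => (1/4 : ℝ) ^ (m + k) * (Nat.choose (m + k + a) b : ℝ)) := by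
  have hs : Summable (fun k : ℕ => ((1/4 : ℝ) ^ m * 2 ^ (m + a)) * (1/2 : ℝ) ^ k) :=
    (summable_geometric_of_lt_one (by norm_num) (by norm_num)).mul_left _
  apply Summable.of_nonneg_of_le (fun k => by positivity) _ hs
  intro k
  calc (1/4 : ℝ) ^ (m + k) * (Nat.choose (m + k + a) b : ℝ)
      ≤ (1/4 : ℝ) ^ (m + k) * 2 ^ (m + k + a) :=
        mul_le_mul_of_nonneg_left (choose_le_two_pow' _ _) (by positivity)
    _ = ((1/4 : ℝ) ^ m * 2 ^ (m + a)) * (1/2 : ℝ) ^ k := by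
        rw [show (1/2 : ℝ) = 1/4 * 2 by norm_num, mul_pow, pow_add, pow_add, pow_add]
        ring

lemma finsum_id (a d : ℕ) :
    ∑ j ∈ range (d + 1), (Nat.choose (a + 1) j : ℝ) * (1/3) ^ (d - j)
      = (Nat.choose a d : ℝ) + 4 * ∑ j ∈ range d, (Nat.choose a j : ℝ) * (1/3) ^ (d - j) := by
  induction d with
  | zero => simp
  | succ d ih =>
    have hL : ∑ j ∈ range (d + 1), (Nat.choose (a + 1) j : ℝ) * (1/3) ^ (d + 1 - j)
        = (1/3) * ∑ j ∈ range (d + 1), (Nat.choose (a + 1) j : ℝ) * (1/3) ^ (d - j) := by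
      rw [Finset.mul_sum]
      refine Finset.sum_congr rfl fun j hj => ?_
      have hj' : j ≤ d := Nat.lt_succ_iff.mp (mem_range.mp hj)
      rw [show d + 1 - j = (d - j) + 1 by omega, pow_succ]
      ring
    have hR : ∑ j ∈ range (d + 1), (Nat.choose a j : ℝ) * (1/3) ^ (d + 1 - j)
        = (Nat.choose a d : ℝ) * (1/3)
          + (1/3) * ∑ j ∈ range d, (Nat.choose a j : ℝ) * (1/3) ^ (d - j) := by
      rw [Finset.sum_range_succ, show d + 1 - d = 1 by omega, pow_one, add_comm,
        Finset.mul_sum]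
      congr 1
      refine Finset.sum_congr rfl fun j hj => ?_
      have hj' : j < d := mem_range.mp hj
      rw [show d + 1 - j = (d - j) + 1 by omega, pow_succ]
      ring
    have hpas : ((a + 1).choose (d + 1) : ℝ) = (a.choose d : ℝ) + (a.choose (d + 1) : ℝ) := by
      exact_mod_cast congrArg (Nat.cast (R := ℝ)) (Nat.choose_succ_succ a d)
    rw [Finset.sum_range_succ, hL, ih, hR, show d + 1 - (d + 1) = 0 by omega, pow_zero,
      hpas]
    ring

lemma U_eq (e : ℕ) (m : ℕ) :
    ∑' k : ℕ, (1/4 : ℝ) ^ (m + k) * (Nat.choose (m + k + e) e : ℝ)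
      = (4/3) * (1/4 : ℝ) ^ m *
        ∑ j ∈ range (e + 1), (Nat.choose (m + e) j : ℝ) * (1/3) ^ (e - j) := by
  induction e with
  | zero =>
    simp only [Nat.add_zero, Nat.choose_zero_right, Nat.cast_one, mul_one]
    rw [show (fun k : ℕ => (1/4 : ℝ) ^ (m + k)) = fun k : ℕ => (1/4 : ℝ) ^ m * (1/4 : ℝ) ^ k
      from funext fun k => pow_add _ _ _, tsum_mul_left,
      tsum_geometric_of_lt_one (by norm_num) (by norm_num)]
    norm_num
    ring
  | succ e ih =>
    have hA : Summable (fun k : ℕ => (1/4 : ℝ) ^ (m + k) * (Nat.choose (m + k + (e + 1)) (e + 1) : ℝ)) :=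
      summable_aux m (e + 1) (e + 1)
    have hB : Summable (fun k : ℕ => (1/4 : ℝ) ^ (m + k) * (Nat.choose (m + k + e) e : ℝ)) :=
      summable_aux m e e
    have hV : Summable (fun k : ℕ => (1/4 : ℝ) ^ (m + k) * (Nat.choose (m + k + e) (e + 1) : ℝ)) :=
      summable_aux m e (e + 1)
    set A := ∑' k : ℕ, (1/4 : ℝ) ^ (m + k) * (Nat.choose (m + k + (e + 1)) (e + 1) : ℝ) with hAdef
    set B := ∑' k : ℕ, (1/4 : ℝ) ^ (m + k) * (Nat.choose (m + k + e) e : ℝ) with hBdef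
    set V := ∑' k : ℕ, (1/4 : ℝ) ^ (m + k) * (Nat.choose (m + k + e) (e + 1) : ℝ) with hVdef
    have hsplit : A = B + V := by
      rw [hAdef, hBdef, hVdef, ← Summable.tsum_add hB hV]
      refine tsum_congr fun k => ?_
      have hp : Nat.choose (m + k + (e + 1)) (e + 1)
          = Nat.choose (m + k + e) e + Nat.choose (m + k + e) (e + 1) := by
        rw [show m + k + (e + 1) = (m + k + e) + 1 by omega]
        exact Nat.choose_succ_succ _ _
      rw [hp]
      push_cast
      ring
    have hshift : V = (1/4 : ℝ) ^ m * (Nat.choose (m + e) (e + 1) : ℝ) + (1/4) * A := by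
      have h0 : V = (1/4 : ℝ) ^ (m + 0) * (Nat.choose (m + 0 + e) (e + 1) : ℝ)
          + ∑' k : ℕ, (1/4 : ℝ) ^ (m + (k + 1)) * (Nat.choose (m + (k + 1) + e) (e + 1) : ℝ) := by
        rw [hVdef]
        exact Summable.tsum_eq_zero_add hV
      have h1 : ∑' k : ℕ, (1/4 : ℝ) ^ (m + (k + 1)) * (Nat.choose (m + (k + 1) + e) (e + 1) : ℝ)
          = (1/4) * A := by
        rw [hAdef, ← tsum_mul_left]
        refine tsum_congr fun k => ?_
        rw [show m + (k + 1) + e = m + k + (e + 1) by omega,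
          show m + (k + 1) = (m + k) + 1 by omega, pow_succ]
        ring
      rw [h0, h1]
      norm_num
    have hAval : A = (4/3) * (B + (1/4 : ℝ) ^ m * (Nat.choose (m + e) (e + 1) : ℝ)) := by
      have h2 := hsplit
      rw [hshift] at h2
      linarith
    rw [hAval, ih]
    have hfin := finsum_id (m + e) (e + 1)
    have hconv : ∑ j ∈ range (e + 1), (Nat.choose (m + e) j : ℝ) * (1/3) ^ (e + 1 - j)
        = (1/3) * ∑ j ∈ range (e + 1), (Nat.choose (m + e) j : ℝ) * (1/3) ^ (e - j) := by
      rw [Finset.mul_sum]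
      refine Finset.sum_congr rfl fun j hj => ?_
      have hj' : j < e + 1 := mem_range.mp hj
      rw [show e + 1 - j = (e - j) + 1 by omega, pow_succ]
      ring
    rw [hconv] at hfin
    rw [show m + (e + 1) = (m + e) + 1 by omega, hfin]
    ring

theorem combination_technique_tail_sum (n d : ℕ) (hd : 1 ≤ d) :
    ∑' k : ℕ, (2 : ℝ) ^ (-(2 * ((n : ℤ) + 1 + k))) * (Nat.choose (n + 1 + k + d - 1) (d - 1))
      = (1 / 3) * (2 : ℝ) ^ (-(2 * (n : ℤ))) *
        ∑ k ∈ Finset.range d, (Nat.choose (n + d) k : ℝ) * (1 / 3 : ℝ) ^ (d - 1 - k) := by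
  obtain ⟨e, rfl⟩ : ∃ e, d = e + 1 := ⟨d - 1, by omega⟩
  have hpow : ∀ N : ℕ, (2 : ℝ) ^ (-(2 * (N : ℤ))) = (1/4 : ℝ) ^ N := by
    intro N
    rw [show -(2 * (N : ℤ)) = -((2 * N : ℕ) : ℤ) by push_cast; ring, zpow_neg, zpow_natCast,
      pow_mul, show ((2 : ℝ) ^ 2) = 4 by norm_num, ← inv_pow, one_div]
  have hlhs : ∑' k : ℕ, (2 : ℝ) ^ (-(2 * ((n : ℤ) + 1 + k))) * (Nat.choose (n + 1 + k + (e + 1) - 1) ((e + 1) - 1))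
      = ∑' k : ℕ, (1/4 : ℝ) ^ ((n + 1) + k) * (Nat.choose ((n + 1) + k + e) e : ℝ) := by
    refine tsum_congr fun k => ?_
    have h1 : ((n : ℤ) + 1 + k) = ((n + 1 + k : ℕ) : ℤ) := by push_cast; ring
    rw [h1, hpow (n + 1 + k)]
    rfl
  rw [hlhs, U_eq e (n + 1), hpow n, show e + 1 - 1 = e from rfl,
    show n + 1 + e = n + (e + 1) by omega]
  rw [pow_succ]
  ring
end

section
/- Let I be a finite nonempty set of multi-indices in ℕ^d ordered componentwise, and suppose I is closed under componentwise minimum (i ∈ I and j ∈ I implies i ∧ j ∈ I, where (i ∧ j)_k = min(i_k, j_k)). Let I↓ = {i ∈ ℕ^d : ∃ j ∈ I, i ≤ j}. Then there exist integer coefficients (c_j)_{j ∈ I} such that for every i ∈ I↓, ∑_{j ∈ I, j ≥ i} c_j = 1. -/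
open scoped Classical

noncomputable def gcpCoeff (d : ℕ) (I : Finset (Fin d → ℕ)) (i : Fin d → ℕ) : ℤ :=
  1 - ∑ j ∈ (I.filter fun j => i < j).attach, gcpCoeff d I j.1
termination_by (I.filter fun j => i < j).card
decreasing_by
  have hj : j.1 ∈ I ∧ i < j.1 := Finset.mem_filter.mp j.2
  apply Finset.card_lt_card
  constructor
  · intro k hk
    have hk' := Finset.mem_filter.mp hk
    exact Finset.mem_filter.mpr ⟨hk'.1, lt_trans hj.2 hk'.2⟩
  · intro hsub
    have := Finset.mem_filter.mp (hsub (Finset.mem_filter.mpr ⟨hj.1, hj.2⟩))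
    exact lt_irrefl _ this.2

lemma gcpCoeff_sum (d : ℕ) (I : Finset (Fin d → ℕ)) (i : Fin d → ℕ) (hi : i ∈ I) :
    ∑ j ∈ I.filter (fun j => i ≤ j), gcpCoeff d I j = 1 := by
  have hsplit : I.filter (fun j => i ≤ j) = insert i (I.filter fun j => i < j) := by
    ext k
    simp only [Finset.mem_filter, Finset.mem_insert]
    constructor
    · rintro ⟨hk, hle⟩
      rcases eq_or_lt_of_le hle with h | h
      · exact Or.inl h.symm
      · exact Or.inr ⟨hk, h⟩
    · rintro (rfl | ⟨hk, hlt⟩)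
      · exact ⟨hi, le_refl _⟩
      · exact ⟨hk, le_of_lt hlt⟩
  rw [hsplit, Finset.sum_insert (by simp)]
  rw [gcpCoeff]
  rw [Finset.sum_attach (I.filter fun j => i < j) (fun j => gcpCoeff d I j)]
  ring

theorem gcp_solution_of_semilattice (d : ℕ) (I : Finset (Fin d → ℕ))
    (hne : I.Nonempty) (hmin : ∀ i ∈ I, ∀ j ∈ I, i ⊓ j ∈ I) :
    ∃ c : (Fin d → ℕ) → ℤ, ∀ i : Fin d → ℕ, (∃ j ∈ I, i ≤ j) →
      ∑ j ∈ I.filter (fun j => i ≤ j), c j = 1 := by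
  refine ⟨gcpCoeff d I, ?_⟩
  rintro i ⟨j₀, hj₀, hij₀⟩
  set S := I.filter (fun j => i ≤ j) with hS
  have hSne : S.Nonempty := ⟨j₀, Finset.mem_filter.mpr ⟨hj₀, hij₀⟩⟩
  set m := S.inf' hSne id with hm
  have hmI : m ∈ I := by
    apply Finset.inf'_mem (↑I : Set (Fin d → ℕ)) (fun x hx y hy => hmin x hx y hy)
    intro x hx
    exact (Finset.mem_filter.mp hx).1
  have him : i ≤ m := Finset.le_inf' hSne id (fun x hx => (Finset.mem_filter.mp hx).2)
  have hfilt : S = I.filter (fun j => m ≤ j) := by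
    ext k
    simp only [hS, Finset.mem_filter]
    constructor
    · rintro ⟨hk, hle⟩
      exact ⟨hk, Finset.inf'_le id (Finset.mem_filter.mpr ⟨hk, hle⟩)⟩
    · rintro ⟨hk, hle⟩
      exact ⟨hk, le_trans him hle⟩
  rw [hfilt]
  exact gcpCoeff_sum d I m hmI
end
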